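/- The dual one-nondeterministic-step Büchi automaton over Σ, with states q0 (rejecting, initial) and q1 (accepting sink), where q0 has a self-loop on every letter, a transition on every letter to q1, and q1 has a self-loop on every letter, specifies exactly the hyperproperty of all co-safety properties: {B^f | f a resolver of B} = {P ⊆ Σ^ω | P is a co-safety property}. -/

import Mathlib

open Filter

/-- A (nondeterministic) Büchi automaton over alphabet `σ` with state type `Q`:
initial state, total transition relation, and set of accepting states. -/
structure BAut (σ : Type) (Q : Type) where
  init : Q
  Δ : Q → σ → Q → Prop
  total : ∀ q a, ∃ q', Δ q a q'
  F : Q → Prop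

namespace BAut

variable {σ Q : Type}

/-- The last state of a history. -/
def hlast (A : BAut σ Q) (h : List (σ × Q)) : Q :=
  (h.getLast?.map Prod.snd).getD A.init

/-- A resolver: maps each history and next letter to a successor state consistent with Δ. -/
structure Resolver (A : BAut σ Q) where
  f : List (σ × Q) → σ → Q
  consistent : ∀ h a, A.Δ (A.hlast h) a (f h a)

/-- The history produced by a resolver on the first `n` letters of a word. -/
def Resolver.hist {A : BAut σ Q} (r : Resolver A) (w : ℕ → σ) : ℕ → List (σ × Q)
  | 0 => []
  | n + 1 => r.hist w n ++ [(w n, r.f (r.hist w n) (w n))]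

/-- The unique run induced by a resolver on a word. -/
def Resolver.run {A : BAut σ Q} (r : Resolver A) (w : ℕ → σ) : ℕ → Q
  | 0 => A.init
  | n + 1 => r.f (r.hist w n) (w n)

/-- Büchi acceptance: the run induced by `r` on `w` visits accepting states
infinitely often. -/
def Acc (A : BAut σ Q) (r : Resolver A) (w : ℕ → σ) : Prop :=
  ∃ᶠ n in atTop, A.F (r.run w n)

/-- `A^f`: the trace property (language) specified by `A` with resolver `f`. -/
def Lang (A : BAut σ Q) (r : Resolver A) : Set (ℕ → σ) := {w | A.Acc r w}

/-- The hyperproperty specified by `A`: the set of trace properties `A^f` for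
resolvers `f` of `A`. -/
def Hyper (A : BAut σ Q) : Set (Set (ℕ → σ)) := {P | ∃ r : Resolver A, A.Lang r = P}

end BAut

/-- `P` is a safety property: every word not in `P` has a finite prefix none of whose
extensions is in `P`. -/
def IsSafety {σ : Type} (P : Set (ℕ → σ)) : Prop :=
  ∀ w, w ∉ P → ∃ n : ℕ, ∀ w' : ℕ → σ, (∀ i < n, w' i = w i) → w' ∉ P

/-- `P` is a co-safety property: every word in `P` has a finite prefix all of whose
extensions are in `P`. -/
def IsCoSafety {σ : Type} (P : Set (ℕ → σ)) : Prop :=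
  ∀ w ∈ P, ∃ n : ℕ, ∀ w' : ℕ → σ, (∀ i < n, w' i = w i) → w' ∈ P

/-- The two states of the dual one-nondeterministic-step automaton. -/
inductive S2 where
  | q0 | q1
  deriving DecidableEq

instance instFintypeS2 : Fintype S2 where
  elems := {S2.q0, S2.q1}
  complete := by
    intro x
    cases x <;> simp

/-- The dual one-nondeterministic-step (co-safety) Büchi automaton: `q0` is rejecting
and initial, with a self-loop on every letter and a transition on every letter to the
accepting sink `q1`, which loops on every letter. -/
def coSafeAut (σ : Type) : BAut σ S2 where
  init := .q0
  Δ := fun q _ q' => match q with | .q0 => True | .q1 => q' = .q1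
  total := by
    intro q a
    cases q
    · exact ⟨.q0, trivial⟩
    · exact ⟨.q1, rfl⟩
  F := fun q => q = .q1

section Aux

open BAut

variable {σ Q : Type}

lemma hlast_hist (A : BAut σ Q) (r : Resolver A) (w : ℕ → σ) (n : ℕ) :
    A.hlast (r.hist w n) = r.run w n := by
  cases n with
  | zero => rfl
  | succ n =>
    show A.hlast (r.hist w n ++ [(w n, r.f (r.hist w n) (w n))]) = _
    simp [BAut.hlast, List.getLast?_concat, Resolver.run]

lemma run_step (A : BAut σ Q) (r : Resolver A) (w : ℕ → σ) (n : ℕ) :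
    A.Δ (r.run w n) (w n) (r.run w (n + 1)) := by
  rw [← hlast_hist]; exact r.consistent _ _

lemma hist_congr (A : BAut σ Q) (r : Resolver A) (w w' : ℕ → σ) (n : ℕ)
    (h : ∀ i < n, w' i = w i) : r.hist w' n = r.hist w n := by
  induction n with
  | zero => rfl
  | succ n ih =>
    have hn : r.hist w' n = r.hist w n := ih (fun i hi => h i (Nat.lt_succ_of_lt hi))
    show r.hist w' n ++ _ = r.hist w n ++ _
    rw [hn, h n (Nat.lt_succ_self n)]

lemma run_congr (A : BAut σ Q) (r : Resolver A) (w w' : ℕ → σ) (n : ℕ)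
    (h : ∀ i < n, w' i = w i) : r.run w' n = r.run w n := by
  cases n with
  | zero => rfl
  | succ n =>
    show r.f (r.hist w' n) (w' n) = r.f (r.hist w n) (w n)
    rw [hist_congr A r w w' n (fun i hi => h i (Nat.lt_succ_of_lt hi)),
      h n (Nat.lt_succ_self n)]

lemma hist_fst (r : Resolver (coSafeAut σ)) (w : ℕ → σ) (n : ℕ) :
    ((r.hist w n).map Prod.fst) = (List.range n).map w := by
  induction n with
  | zero => rfl
  | succ n ih =>
    show ((r.hist w n ++ [(w n, _)]).map Prod.fst) = _
    rw [List.map_append, ih, List.range_succ, List.map_append]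
    rfl

lemma sink (r : Resolver (coSafeAut σ)) (w : ℕ → σ) {n : ℕ} (h : r.run w n = S2.q1) :
    ∀ m, n ≤ m → r.run w m = S2.q1 := by
  intro m hm
  induction m with
  | zero => have : n = 0 := by omega
            rw [← this]; exact h
  | succ m ih =>
    rcases Nat.lt_or_ge n (m + 1) with h' | h'
    · have hm' : r.run w m = S2.q1 := ih (by omega)
      have := run_step (coSafeAut σ) r w m
      rw [hm'] at this
      exact this
    · have : n = m + 1 := by omega
      rw [← this]; exact h

lemma acc_iff (r : Resolver (coSafeAut σ)) (w : ℕ → σ) :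
    (coSafeAut σ).Acc r w ↔ ∃ n, r.run w n = S2.q1 := by
  constructor
  · intro h; exact h.exists
  · rintro ⟨n, hn⟩
    rw [BAut.Acc, Filter.frequently_atTop]
    intro a
    exact ⟨max a n, le_max_left _ _, sink r w hn _ (le_max_right _ _)⟩

end Aux

/-- The dual one-nondeterministic-step Büchi automaton specifies
exactly the hyperproperty of all co-safety properties. -/
theorem coSafeAut_hyper_eq_cosafety (σ : Type) [Fintype σ] :
    (coSafeAut σ).Hyper = {P : Set (ℕ → σ) | IsCoSafety P} := by
  classical
  ext P
  constructor
  · -- every specified language is co-safety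
    rintro ⟨r, rfl⟩
    intro w hw
    rw [BAut.Lang, Set.mem_setOf_eq, acc_iff] at hw
    obtain ⟨n, hn⟩ := hw
    refine ⟨n, fun w' hw' => ?_⟩
    rw [BAut.Lang, Set.mem_setOf_eq, acc_iff]
    exact ⟨n, (run_congr _ r w w' n hw').trans hn⟩
  · -- every co-safety property is specified by some resolver
    intro hP
    set good : List σ → Prop :=
      fun L => ∀ w' : ℕ → σ, (∀ i < L.length, L[i]? = some (w' i)) → w' ∈ P with hgood
    have key : ∀ (w : ℕ → σ) (n i : ℕ), i < n →
        ((List.range n).map w)[i]? = some (w i) := by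
      intro w n i hi
      rw [List.getElem?_map, List.getElem?_range hi]; rfl
    set r : BAut.Resolver (coSafeAut σ) :=
      { f := fun h a =>
          if (coSafeAut σ).hlast h = S2.q1 ∨ good (h.map Prod.fst ++ [a])
          then S2.q1 else S2.q0
        consistent := by
          intro h a
          show (coSafeAut σ).Δ ((coSafeAut σ).hlast h) a _
          cases hq : (coSafeAut σ).hlast h with
          | q0 => trivial
          | q1 =>
            show ((if S2.q1 = S2.q1 ∨ good (h.map Prod.fst ++ [a])
                then S2.q1 else S2.q0) = S2.q1)
            rw [if_pos (Or.inl rfl)] } with hr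
    have hL : ∀ (w : ℕ → σ) (n : ℕ),
        (r.hist w n).map Prod.fst ++ [w n] = (List.range (n + 1)).map w := by
      intro w n
      rw [hist_fst, List.range_succ, List.map_append]
      rfl
    refine ⟨r, ?_⟩
    ext w
    rw [BAut.Lang, Set.mem_setOf_eq, acc_iff]
    constructor
    · rintro ⟨n, hn⟩
      induction n with
      | zero => exact absurd hn (by simp [BAut.Resolver.run, coSafeAut])
      | succ n ih =>
        have hrun : r.run w (n + 1) =
            (if (coSafeAut σ).hlast (r.hist w n) = S2.q1 ∨
                good ((r.hist w n).map Prod.fst ++ [w n])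
             then S2.q1 else S2.q0) := rfl
        by_cases hc : (coSafeAut σ).hlast (r.hist w n) = S2.q1 ∨
            good ((r.hist w n).map Prod.fst ++ [w n])
        · rcases hc with hc | hc
          · exact ih ((hlast_hist _ r w n).symm.trans hc)
          · rw [hL] at hc
            refine hc w ?_
            intro i hi
            rw [List.length_map, List.length_range] at hi
            exact key w (n + 1) i hi
        · rw [hrun, if_neg hc] at hn
          exact absurd hn (by simp)
    · intro hw
      obtain ⟨n, hn⟩ := hP w hw
      refine ⟨n + 1, ?_⟩
      show (if (coSafeAut σ).hlast (r.hist w n) = S2.q1 ∨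
            good ((r.hist w n).map Prod.fst ++ [w n])
            then S2.q1 else S2.q0) = S2.q1
      rw [if_pos]
      right
      rw [hL]
      intro w' hw'
      refine hn w' ?_
      intro i hi
      have := hw' i (by rw [List.length_map, List.length_range]; omega)
      rw [key w (n + 1) i (by omega)] at this
      exact (Option.some_injective _ this).symm
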